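/- For all $x \in [0, 1/4]$, the inverse binary entropy function satisfies $h_2^{-1}(1 - x^2) \leq \frac{1}{2} - \frac{\sqrt{\ln 2}}{2}\, x$, where $h_2^{-1}: [0,1] \to [0,1/2]$ is the inverse of the binary entropy function $h_2$ restricted to $[0,1/2]$. -/

import Mathlib

/-!
In nats, `log 2 · (1 - h₂ y) = y log (2y) + (1 - y) log (2(1 - y))`. Bounding each logarithm
by `log z ≤ z - 1` gives `y (2y - 1) + (1 - y)(1 - 2y) = (1 - 2y)²`, so `log 2 · x² ≤ (1 - 2y)²`,
and taking square roots yields `√(log 2) · x ≤ 1 - 2y`.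
-/

noncomputable def h2 (x : ℝ) : ℝ :=
  x * Real.logb 2 (1 / x) + (1 - x) * Real.logb 2 (1 / (1 - x))

open Real

lemma h2_eq_binEntropy_div_log_two (x : ℝ) : h2 x = binEntropy x / log 2 := by
  simp only [h2, binEntropy, logb, one_div]
  ring

lemma mul_log_two_add_mul_log_le {q : ℝ} (hq : 0 ≤ q) :
    q * log 2 + q * log q ≤ q * (2 * q - 1) := by
  rcases hq.eq_or_lt with rfl | hq
  · simp
  rw [← mul_add, ← log_mul two_ne_zero hq.ne']
  exact mul_le_mul_of_nonneg_left (log_le_sub_one_of_pos (by positivity)) hq.le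

lemma log_two_sub_binEntropy_le {p : ℝ} (hp₀ : 0 ≤ p) (hp₁ : p ≤ 1) :
    log 2 - binEntropy p ≤ (1 - 2 * p) ^ 2 := by
  have hp := mul_log_two_add_mul_log_le hp₀
  have hq := mul_log_two_add_mul_log_le (sub_nonneg.mpr hp₁)
  rw [binEntropy, log_inv, log_inv]
  linear_combination hp + hq

theorem stmt10_general (x y : ℝ) (hy0 : 0 ≤ y) (hy : y ≤ 1 / 2)
    (h : h2 y = 1 - x ^ 2) :
    y ≤ 1 / 2 - (Real.sqrt (Real.log 2) / 2) * x := by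
  have hlog : 0 < log 2 := log_pos one_lt_two
  have hsq : log 2 * x ^ 2 ≤ (1 - 2 * y) ^ 2 := by
    rw [h2_eq_binEntropy_div_log_two, div_eq_iff hlog.ne'] at h
    linear_combination log_two_sub_binEntropy_le hy0 (by linarith) + h
  have hroot : √(log 2) * x ≤ 1 - 2 * y :=
    calc √(log 2) * x ≤ √(log 2) * |x| :=
          mul_le_mul_of_nonneg_left (le_abs_self x) (sqrt_nonneg _)
      _ = √(log 2 * x ^ 2) := by rw [sqrt_mul hlog.le, sqrt_sq_eq_abs]
      _ ≤ √((1 - 2 * y) ^ 2) := sqrt_le_sqrt hsq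
      _ = 1 - 2 * y := sqrt_sq (by linarith)
  linarith

/-- `h₂⁻¹(1 - x²) ≤ 1/2 - (√(ln 2)/2)·x` for `x ∈ [0,1/4]`:
if `y ∈ [0,1/2]` satisfies `h₂(y) = 1 - x²` then `y ≤ 1/2 - (√(ln 2)/2)·x`. -/
theorem stmt10 (x y : ℝ) (hx0 : 0 ≤ x) (hx : x ≤ 1 / 4) (hy0 : 0 ≤ y) (hy : y ≤ 1 / 2)
    (h : h2 y = 1 - x ^ 2) :
    y ≤ 1 / 2 - (Real.sqrt (Real.log 2) / 2) * x :=
  stmt10_general x y hy0 hy h
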